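/- Let n ≥ 2, a ∈ ℝ, and fix y ∈ ℝ^{n-1}. Define K : {x ∈ ℝⁿ : x_n ≠ 0} → ℝ by K(x) = |x_n|^{1-a} (|x'-y|² + x_n²)^{-(n-a)/2}, where x = (x', x_n). Then Δ_a K(x) = 0 for every x with x_n ≠ 0. -/

import Mathlib

/-!
Write `T = x_n²` and `S = |x' - y|² + x_n²`. On `x_n ≠ 0` the family `T^p S^q` is stable under
`Δ_a` up to one shift: since `∂_j S = 2 (x_j - y_j)`, `∂_n S = 2 x_n`, `∂_n T = 2 x_n` and
`|x' - y|² = S - T`, one finds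
`Δ_a (T^p S^q) = 2q (2q + n - 2 + 4p + a) T^{p+1} S^{q-1} + 2p (2p - 1 + a) T^p S^q`.
The kernel is `K = T^{(1-a)/2} S^{-(n-a)/2}`, and for `p = (1-a)/2`, `q = -(n-a)/2` both
coefficients vanish.
-/

noncomputable def pd {E F : Type*} [NormedAddCommGroup E] [NormedSpace ℝ E]
    [NormedAddCommGroup F] [NormedSpace ℝ F] (v : E) (u : E → F) (x : E) : F :=
  fderiv ℝ u x v

/-- The operator `Δ_a u = x_n² Δu + a x_n ∂u/∂x_n` on `ℝⁿ = ℝ^m × ℝ` (real valued). -/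
noncomputable def deltaA (m : ℕ) (a : ℝ) (u : (Fin m → ℝ) × ℝ → ℝ)
    (x : (Fin m → ℝ) × ℝ) : ℝ :=
  x.2 ^ 2 *
      ((∑ j, pd (Pi.single j 1, (0 : ℝ)) (pd (Pi.single j 1, (0 : ℝ)) u) x)
        + pd ((0 : Fin m → ℝ), (1 : ℝ)) (pd ((0 : Fin m → ℝ), (1 : ℝ)) u) x)
    + a * x.2 * pd ((0 : Fin m → ℝ), (1 : ℝ)) u x

/-- The Poisson kernel `K(x) = |x_n|^{1-a} (|x'-y|² + x_n²)^{-(n-a)/2}`. -/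
noncomputable def kerK (n : ℕ) (a : ℝ) (y : Fin (n - 1) → ℝ)
    (x : (Fin (n - 1) → ℝ) × ℝ) : ℝ :=
  |x.2| ^ (1 - a) * ((∑ j, (x.1 j - y j) ^ 2) + x.2 ^ 2) ^ (-(((n : ℝ) - a) / 2))

open ContinuousLinearMap

noncomputable section

variable {m : ℕ} (y : Fin m → ℝ)

def sqDist (x : (Fin m → ℝ) × ℝ) : ℝ :=
  (∑ j, (x.1 j - y j) ^ 2) + x.2 ^ 2

def heightDistPow (p q : ℝ) (x : (Fin m → ℝ) × ℝ) : ℝ :=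
  (x.2 ^ 2) ^ p * sqDist y x ^ q

lemma sqDist_pos {x : (Fin m → ℝ) × ℝ} (hx : x.2 ≠ 0) : 0 < sqDist y x := by
  unfold sqDist; positivity

def sqDistFDeriv (x : (Fin m → ℝ) × ℝ) : ((Fin m → ℝ) × ℝ) →L[ℝ] ℝ :=
  (∑ j, (2 * (x.1 j - y j)) • (proj j).comp (fst ℝ (Fin m → ℝ) ℝ))
    + (2 * x.2) • snd ℝ (Fin m → ℝ) ℝ

lemma sqDistFDeriv_single (x : (Fin m → ℝ) × ℝ) (j : Fin m) :
    sqDistFDeriv y x (Pi.single j 1, 0) = 2 * (x.1 j - y j) := by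
  simp [sqDistFDeriv, Pi.single_apply]

lemma sqDistFDeriv_vertical (x : (Fin m → ℝ) × ℝ) :
    sqDistFDeriv y x (0, 1) = 2 * x.2 := by
  simp [sqDistFDeriv]

lemma hasFDerivAt_coord_sub (c : ℝ) (j : Fin m) (x : (Fin m → ℝ) × ℝ) :
    HasFDerivAt (fun z : (Fin m → ℝ) × ℝ => z.1 j - c)
      ((proj j).comp (fst ℝ (Fin m → ℝ) ℝ)) x :=
  ((proj (R := ℝ) (φ := fun _ : Fin m => ℝ) j).comp (fst ℝ (Fin m → ℝ) ℝ)).hasFDerivAt.sub_const c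

lemma hasFDerivAt_snd_sq (x : (Fin m → ℝ) × ℝ) :
    HasFDerivAt (fun z : (Fin m → ℝ) × ℝ => z.2 ^ 2) ((2 * x.2) • snd ℝ (Fin m → ℝ) ℝ) x := by
  simpa using ((snd ℝ (Fin m → ℝ) ℝ).hasFDerivAt (x := x)).pow 2

lemma hasFDerivAt_sqDist (x : (Fin m → ℝ) × ℝ) :
    HasFDerivAt (sqDist y) (sqDistFDeriv y x) x := by
  refine (HasFDerivAt.fun_sum fun j _ => ?_).add (hasFDerivAt_snd_sq x)
  simpa using (hasFDerivAt_coord_sub (y j) j x).pow 2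

lemma hasFDerivAt_heightDistPow (p q : ℝ) {x : (Fin m → ℝ) × ℝ} (hx : x.2 ≠ 0) :
    HasFDerivAt (heightDistPow y p q)
      ((x.2 ^ 2) ^ p • (q * sqDist y x ^ (q - 1)) • sqDistFDeriv y x
        + sqDist y x ^ q • (p * (x.2 ^ 2) ^ (p - 1)) • (2 * x.2) • snd ℝ (Fin m → ℝ) ℝ) x :=
  ((hasFDerivAt_snd_sq x).rpow_const (Or.inl (pow_ne_zero 2 hx))).mul
    ((hasFDerivAt_sqDist y x).rpow_const (Or.inl (sqDist_pos y hx).ne'))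

lemma pd_heightDistPow_single (p q : ℝ) {x : (Fin m → ℝ) × ℝ} (hx : x.2 ≠ 0) (j : Fin m) :
    pd (Pi.single j 1, 0) (heightDistPow y p q) x
      = 2 * q * (x.1 j - y j) * heightDistPow y p (q - 1) x := by
  rw [pd, (hasFDerivAt_heightDistPow y p q hx).fderiv]
  simp only [add_apply, smul_apply, smul_eq_mul, sqDistFDeriv_single, coe_snd', heightDistPow]
  ring

lemma pd_heightDistPow_vertical (p q : ℝ) {x : (Fin m → ℝ) × ℝ} (hx : x.2 ≠ 0) :
    pd (0, 1) (heightDistPow y p q) x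
      = 2 * q * x.2 * heightDistPow y p (q - 1) x + 2 * p * x.2 * heightDistPow y (p - 1) q x := by
  rw [pd, (hasFDerivAt_heightDistPow y p q hx).fderiv]
  simp only [add_apply, smul_apply, smul_eq_mul, sqDistFDeriv_vertical, coe_snd', heightDistPow]
  ring

lemma eventually_snd_ne_zero {x : (Fin m → ℝ) × ℝ} (hx : x.2 ≠ 0) :
    ∀ᶠ z in nhds x, z.2 ≠ 0 :=
  continuous_snd.continuousAt.eventually_ne hx

lemma pd_pd_heightDistPow_single (p q : ℝ) {x : (Fin m → ℝ) × ℝ} (hx : x.2 ≠ 0) (j : Fin m) :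
    pd (Pi.single j 1, 0) (pd (Pi.single j 1, 0) (heightDistPow y p q)) x
      = 4 * q * (q - 1) * (x.1 j - y j) ^ 2 * heightDistPow y p (q - 2) x
        + 2 * q * heightDistPow y p (q - 1) x := by
  have hpd : pd (Pi.single j 1, 0) (heightDistPow y p q)
      =ᶠ[nhds x] fun z => (2 * q * (z.1 j - y j)) * heightDistPow y p (q - 1) z := by
    filter_upwards [eventually_snd_ne_zero hx] with z hz
    rw [pd_heightDistPow_single y p q hz]
  have hderiv := ((hasFDerivAt_coord_sub (y j) j x).const_mul (2 * q)).fun_mul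
    (hasFDerivAt_heightDistPow y p (q - 1) hx)
  rw [pd, hpd.fderiv_eq, hderiv.fderiv]
  simp only [add_apply, smul_apply, smul_eq_mul, sqDistFDeriv_single, coe_snd', comp_apply,
    coe_fst', proj_apply, Pi.single_eq_same, heightDistPow, show q - 1 - 1 = q - 2 by ring]
  ring

lemma pd_pd_heightDistPow_vertical (p q : ℝ) {x : (Fin m → ℝ) × ℝ} (hx : x.2 ≠ 0) :
    pd (0, 1) (pd (0, 1) (heightDistPow y p q)) x
      = 4 * q * (q - 1) * x.2 ^ 2 * heightDistPow y p (q - 2) x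
        + 8 * p * q * x.2 ^ 2 * heightDistPow y (p - 1) (q - 1) x
        + 4 * p * (p - 1) * x.2 ^ 2 * heightDistPow y (p - 2) q x
        + 2 * q * heightDistPow y p (q - 1) x + 2 * p * heightDistPow y (p - 1) q x := by
  have hpd : pd (0, 1) (heightDistPow y p q) =ᶠ[nhds x] fun z =>
      (2 * q * z.2) * heightDistPow y p (q - 1) z + (2 * p * z.2) * heightDistPow y (p - 1) q z := by
    filter_upwards [eventually_snd_ne_zero hx] with z hz
    rw [pd_heightDistPow_vertical y p q hz]
  have hsnd (c : ℝ) : HasFDerivAt (fun z : (Fin m → ℝ) × ℝ => c * z.2)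
      (c • snd ℝ (Fin m → ℝ) ℝ) x :=
    ((snd ℝ (Fin m → ℝ) ℝ).hasFDerivAt (x := x)).const_mul c
  have hderiv := ((hsnd (2 * q)).fun_mul (hasFDerivAt_heightDistPow y p (q - 1) hx)).fun_add
    ((hsnd (2 * p)).fun_mul (hasFDerivAt_heightDistPow y (p - 1) q hx))
  rw [pd, hpd.fderiv_eq, hderiv.fderiv]
  simp only [add_apply, smul_apply, smul_eq_mul, sqDistFDeriv_vertical, coe_snd', heightDistPow,
    show q - 1 - 1 = q - 2 by ring, show p - 1 - 1 = p - 2 by ring]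
  ring

theorem deltaA_heightDistPow (a p q : ℝ) {x : (Fin m → ℝ) × ℝ} (hx : x.2 ≠ 0) :
    deltaA m a (heightDistPow y p q) x
      = 2 * q * (2 * q + m - 1 + 4 * p + a) * heightDistPow y (p + 1) (q - 1) x
        + 2 * p * (2 * p - 1 + a) * heightDistPow y p q x := by
  have hT : x.2 ^ 2 ≠ 0 := pow_ne_zero 2 hx
  have hS : sqDist y x ≠ 0 := (sqDist_pos y hx).ne'
  have hR : ∑ j, (x.1 j - y j) ^ 2 = sqDist y x - x.2 ^ 2 := by rw [sqDist]; ring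
  have hsum : ∑ j, pd (Pi.single j 1, 0) (pd (Pi.single j 1, 0) (heightDistPow y p q)) x
      = 4 * q * (q - 1) * (sqDist y x - x.2 ^ 2) * heightDistPow y p (q - 2) x
        + 2 * q * m * heightDistPow y p (q - 1) x := by
    simp only [pd_pd_heightDistPow_single y p q hx, Finset.sum_add_distrib, Finset.sum_const,
      Finset.card_univ, Fintype.card_fin, nsmul_eq_mul, ← hR, Finset.sum_mul, Finset.mul_sum]
    ring
  rw [deltaA, hsum, pd_pd_heightDistPow_vertical y p q hx, pd_heightDistPow_vertical y p q hx]
  simp only [heightDistPow, show q - 2 = q - 1 - 1 by ring, show p - 2 = p - 1 - 1 by ring,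
    Real.rpow_sub_one hT, Real.rpow_sub_one hS, Real.rpow_add_one hT]
  field_simp
  ring

end

lemma kerK_eq_heightDistPow (n : ℕ) (a : ℝ) (y : Fin (n - 1) → ℝ) :
    kerK n a y = heightDistPow y ((1 - a) / 2) (-(((n : ℝ) - a) / 2)) := by
  funext x
  rw [kerK, heightDistPow, sqDist, ← sq_abs x.2, ← Real.rpow_natCast_mul (abs_nonneg _)]
  norm_num [mul_div_cancel₀]

/-- For every `x` with `x_n ≠ 0`, `Δ_a K(x) = 0`. -/
theorem statement4 (n : ℕ) (hn : 2 ≤ n) (a : ℝ) (y : Fin (n - 1) → ℝ)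
    (x : (Fin (n - 1) → ℝ) × ℝ) (hx : x.2 ≠ 0) :
    deltaA (n - 1) a (kerK n a y) x = 0 := by
  have hcast : ((n - 1 : ℕ) : ℝ) = n - 1 := by rw [Nat.cast_sub (by omega), Nat.cast_one]
  rw [kerK_eq_heightDistPow, deltaA_heightDistPow y a _ _ hx, hcast]
  ring
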